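/- Lemma 5.1(b): Let x* ∈ X be an optimal solution of min_{x∈X} Ψ(x), let x^0 ∈ X, set y_i^0 = ∇f_i(x^0) and y_i* = ∇f_i(x*) for i = 1, …, m, and define D(y^0, y*) := Σ_{i=1}^m [J_i(y_i*) − J_i(y_i^0) − ⟨x^0, y_i* − y_i^0⟩]. Then D(y^0, y*) ≤ Ψ(x^0) − Ψ(x*). -/

import Mathlib

/-! For convex differentiable `f`, the supremum defining the conjugate at `∇f(v)` is attained at
`v`, so the dual Bregman distance `D(y⁰, y*)` equals the primal Bregman distance
`Σ_i [f_i(x⁰) - f_i(x*) - ⟪∇f_i(x*), x⁰ - x*⟫]`. The first-order optimality condition of `x*` for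
the composite problem, `(h + μω)(x*) - (h + μω)(x⁰) ≤ ⟪Σ_i ∇f_i(x*), x⁰ - x*⟫`, which holds because
`h + μω` is convex, turns this identity into the bound. -/

open scoped RealInnerProductSpace

open Set AffineMap

section

variable {E : Type*} [NormedAddCommGroup E] [NormedSpace ℝ E]

theorem HasFDerivAt.hasDerivAt_comp_lineMap {G : Type*} [NormedAddCommGroup G] [NormedSpace ℝ G]
    {f : E → G} {f' : E →L[ℝ] G} {x : E} (hf : HasFDerivAt f f' x) (y : E) :
    HasDerivAt (fun t : ℝ => f (lineMap x y t)) (f' (y - x)) 0 := by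
  rw [← lineMap_apply_zero x y (k := ℝ)] at hf
  exact hf.comp_hasDerivAt 0 hasDerivAt_lineMap

theorem ConvexOn.apply_sub_le_of_hasFDerivAt {s : Set E} {f : E → ℝ} {f' : E →L[ℝ] ℝ} {x y : E}
    (hf : ConvexOn ℝ s f) (hx : x ∈ s) (hy : y ∈ s) (hf' : HasFDerivAt f f' x) :
    f' (y - x) ≤ f y - f x := by
  have hline := hf.comp_affineMap (lineMap x y)
  have h0 : (0 : ℝ) ∈ lineMap x y ⁻¹' s := by simpa using hx
  have h1 : (1 : ℝ) ∈ lineMap x y ⁻¹' s := by simpa using hy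
  simpa [slope_def_field] using
    hline.le_slope_of_hasDerivAt h0 h1 zero_lt_one (hf'.hasDerivAt_comp_lineMap y)

theorem IsMinOn.sub_le_of_hasFDerivAt_add {s : Set E} {F φ : E → ℝ} {F' : E →L[ℝ] ℝ} {x y : E}
    (hmin : IsMinOn (fun u => F u + φ u) s x) (hF : HasFDerivAt F F' x)
    (hφ : ConvexOn ℝ s φ) (hx : x ∈ s) (hy : y ∈ s) :
    φ x - φ y ≤ F' (y - x) := by
  -- `ψ` majorizes `(F + φ) ∘ lineMap x y - φ x` on `[0, 1]` and agrees with it at `0`.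
  set ψ : ℝ → ℝ := fun t => F (lineMap x y t) + t * (φ y - φ x)
  have hψ : HasDerivAt ψ (F' (y - x) + (φ y - φ x)) 0 :=
    (hF.hasDerivAt_comp_lineMap y).add (hasDerivAt_mul_const _)
  have hψmin : IsMinOn ψ (Icc 0 1) 0 := by
    intro t ⟨ht0, ht1⟩
    have hconv := hφ.2 hx hy (sub_nonneg.2 ht1) ht0 (sub_add_cancel 1 t)
    rw [← lineMap_apply_module] at hconv
    have hmin_t := hmin (hφ.1.lineMap_mem hx hy ⟨ht0, ht1⟩)
    simp only [mem_ofPred_eq, smul_eq_mul] at hmin_t hconv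
    simp only [mem_ofPred_eq, ψ, lineMap_apply_zero]
    nlinarith
  have hcone : (1 : ℝ) ∈ posTangentConeAt (Icc 0 1) 0 :=
    mem_posTangentConeAt_of_segment_subset (by rw [zero_add, segment_eq_Icc zero_le_one])
  have hderiv_nonneg := hψmin.localize.hasFDerivWithinAt_nonneg
    hψ.hasFDerivAt.hasFDerivWithinAt hcone
  rw [ContinuousLinearMap.toSpanSingleton_apply, one_smul] at hderiv_nonneg
  linarith

end

section

variable {E : Type*} [NormedAddCommGroup E] [InnerProductSpace ℝ E] [CompleteSpace E]

noncomputable def fenchelConjugate (f : E → ℝ) (y : E) : ℝ := ⨆ u, (⟪u, y⟫ - f u)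

theorem ConvexOn.fenchelConjugate_eq_of_hasGradientAt {f : E → ℝ} {g x : E}
    (hf : ConvexOn ℝ univ f) (hg : HasGradientAt f g x) :
    fenchelConjugate f g = ⟪x, g⟫ - f x := by
  have hle : ∀ u, ⟪u, g⟫ - f u ≤ ⟪x, g⟫ - f x := fun u => by
    have := hf.apply_sub_le_of_hasFDerivAt (mem_univ x) (mem_univ u) hg.hasFDerivAt
    rw [InnerProductSpace.toDual_apply_apply, inner_sub_right] at this
    rw [real_inner_comm g u, real_inner_comm g x]
    linarith
  exact le_antisymm (ciSup_le hle) (le_ciSup ⟨_, forall_mem_range.2 hle⟩ x)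

theorem ConvexOn.fenchelConjugate_bregman_eq {f : E → ℝ} {gx gy x y : E}
    (hf : ConvexOn ℝ univ f) (hx : HasGradientAt f gx x) (hy : HasGradientAt f gy y) :
    fenchelConjugate f gy - fenchelConjugate f gx - ⟪x, gy - gx⟫ = f x - f y - ⟪gy, x - y⟫ := by
  rw [hf.fenchelConjugate_eq_of_hasGradientAt hx, hf.fenchelConjugate_eq_of_hasGradientAt hy,
    inner_sub_right, inner_sub_right, real_inner_comm gy x, real_inner_comm gy y]
  ring

end

theorem dual_bregman_bound_b_general
    {n m : ℕ} (X : Set (EuclideanSpace ℝ (Fin n)))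
    (f : Fin m → EuclideanSpace ℝ (Fin n) → ℝ)
    (f' : Fin m → EuclideanSpace ℝ (Fin n) → EuclideanSpace ℝ (Fin n))
    (μ : ℝ) (hμ : 0 ≤ μ)
    (hfconv : ∀ i, ConvexOn ℝ Set.univ (f i))
    (hfdiff : ∀ i u, HasGradientAt (f i) (f' i u) u)
    (h w : EuclideanSpace ℝ (Fin n) → ℝ)
    (hhconv : ConvexOn ℝ X h) (hwconv : ConvexOn ℝ X w)
    (J : Fin m → EuclideanSpace ℝ (Fin n) → ℝ)
    (hJ : ∀ i y, J i y = ⨆ u, (⟪u, y⟫ - f i u))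
    (x0 : EuclideanSpace ℝ (Fin n)) (hx0 : x0 ∈ X)
    (xstar : EuclideanSpace ℝ (Fin n)) (hxstarX : xstar ∈ X)
    (hopt : ∀ u ∈ X, (∑ i, f i xstar) + h xstar + μ * w xstar ≤
        (∑ i, f i u) + h u + μ * w u)
    (D : ℝ)
    (hD : D = ∑ i, (J i (f' i xstar) - J i (f' i x0) - ⟪x0, f' i xstar - f' i x0⟫)) :
    D ≤ ((∑ i, f i x0) + h x0 + μ * w x0)
        - ((∑ i, f i xstar) + h xstar + μ * w xstar) := by
  have hD_primal : D = ∑ i, (f i x0 - f i xstar - ⟪f' i xstar, x0 - xstar⟫) := by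
    simp only [hD, hJ]
    exact Finset.sum_congr rfl fun i _ =>
      (hfconv i).fenchelConjugate_bregman_eq (hfdiff i x0) (hfdiff i xstar)
  have hmin : IsMinOn (fun u => (∑ i, f i u) + (h u + μ * w u)) X xstar :=
    isMinOn_iff.2 fun u hu => by simpa only [add_assoc] using hopt u hu
  have hfirst_order := hmin.sub_le_of_hasFDerivAt_add
    (HasFDerivAt.fun_sum fun i _ => (hfdiff i xstar).hasFDerivAt)
    (hhconv.add (hwconv.smul hμ)) hxstarX hx0
  simp only [_root_.sum_apply, InnerProductSpace.toDual_apply_apply] at hfirst_order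
  rw [hD_primal, Finset.sum_sub_distrib, Finset.sum_sub_distrib]
  linarith

/-- Lemma 5.1(b): with `y_i^0 = ∇f_i(x^0)`, `y_i* = ∇f_i(x*)` for an optimal
solution `x*` of `min_{x∈X} Ψ(x)`, the Bregman distance
`D(y^0, y*) = Σ_i [J_i(y_i*) - J_i(y_i^0) - ⟨x^0, y_i* - y_i^0⟩]` satisfies
`D(y^0, y*) ≤ Ψ(x^0) - Ψ(x*)`. -/
theorem dual_bregman_bound_b
    {n m : ℕ} (X : Set (EuclideanSpace ℝ (Fin n)))
    (hXne : X.Nonempty) (hXclosed : IsClosed X) (hXconvex : Convex ℝ X)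
    (f : Fin m → EuclideanSpace ℝ (Fin n) → ℝ)
    (f' : Fin m → EuclideanSpace ℝ (Fin n) → EuclideanSpace ℝ (Fin n))
    (L : Fin m → ℝ) (μ : ℝ) (hμ : 0 ≤ μ)
    (hfconv : ∀ i, ConvexOn ℝ Set.univ (f i))
    (hfdiff : ∀ i u, HasGradientAt (f i) (f' i u) u)
    (hfiLip : ∀ i u v, ‖f' i u - f' i v‖ ≤ L i * ‖u - v‖)
    (h w : EuclideanSpace ℝ (Fin n) → ℝ)
    (hhconv : ConvexOn ℝ X h) (hwconv : ConvexOn ℝ X w)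
    (J : Fin m → EuclideanSpace ℝ (Fin n) → ℝ)
    (hJ : ∀ i y, J i y = ⨆ u, (⟪u, y⟫ - f i u))
    (x0 : EuclideanSpace ℝ (Fin n)) (hx0 : x0 ∈ X)
    (xstar : EuclideanSpace ℝ (Fin n)) (hxstarX : xstar ∈ X)
    (hopt : ∀ u ∈ X, (∑ i, f i xstar) + h xstar + μ * w xstar ≤
        (∑ i, f i u) + h u + μ * w u)
    (D : ℝ)
    (hD : D = ∑ i, (J i (f' i xstar) - J i (f' i x0) - ⟪x0, f' i xstar - f' i x0⟫)) :
    D ≤ ((∑ i, f i x0) + h x0 + μ * w x0)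
        - ((∑ i, f i xstar) + h xstar + μ * w xstar) :=
  dual_bregman_bound_b_general X f f' μ hμ hfconv hfdiff h w hhconv hwconv J hJ x0 hx0 xstar hxstarX
    hopt D hD
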